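/- arXiv:1703.10855 — 3 statements merged into one kernel-verified Lean document; each statement's English description precedes it below -/
import Mathlib

section
/- Let v : ℝ³ → ℝ³ be a C¹ vector field and let λ : ℝ³ → ℝ be a C² function with compact support. Then ∫_{ℝ³} (Δλ)(x) (v·∇λ)(x) dx = − Σ_{i,j=1}^{3} ∫_{ℝ³} (∂v_i/∂x_j)(x) (∂λ/∂x_i)(x) (∂λ/∂x_j)(x) dx + ½ ∫_{ℝ³} |∇λ(x)|² (div v)(x) dx. -/
/-! For each pair of directions `a`, `b`, one integration by parts along `b` moves a derivative
off `∂_b∂_b λ`; by symmetry of second derivatives the leftover term is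
`w ∂_bλ ∂_a∂_bλ = ½ w ∂_a (∂_bλ)²`, and a second integration by parts along `a` turns it into
`-½ ∂_a w (∂_bλ)²`. Compact support of `λ` removes all boundary terms. Summing over the
coordinate directions gives the identity. -/

open MeasureTheory

noncomputable section

/-- Partial derivative in the `i`-th coordinate direction on `ℝ³`. -/
def pd {F : Type*} [NormedAddCommGroup F] [NormedSpace ℝ F]
    (f : EuclideanSpace ℝ (Fin 3) → F) (i : Fin 3) (x : EuclideanSpace ℝ (Fin 3)) : F :=
  fderiv ℝ f x (EuclideanSpace.single i 1)

/-- Divergence of a vector field on `ℝ³`. -/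
def divg (v : EuclideanSpace ℝ (Fin 3) → EuclideanSpace ℝ (Fin 3))
    (x : EuclideanSpace ℝ (Fin 3)) : ℝ :=
  ∑ i, pd (fun y => v y i) i x

/-- Laplacian on `ℝ³`. -/
def lap {F : Type*} [NormedAddCommGroup F] [NormedSpace ℝ F]
    (f : EuclideanSpace ℝ (Fin 3) → F) (x : EuclideanSpace ℝ (Fin 3)) : F :=
  ∑ i, pd (pd f i) i x

section

variable {E F : Type*} [NormedAddCommGroup E] [NormedSpace ℝ E]
  [NormedAddCommGroup F] [NormedSpace ℝ F]

theorem ContDiff.fderiv_right_apply {n m : WithTop ℕ∞} {f : E → F} (hf : ContDiff ℝ n f)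
    (hmn : m + 1 ≤ n) (v : E) : ContDiff ℝ m (fderiv ℝ f · v) :=
  (hf.fderiv_right hmn).clm_apply contDiff_const

theorem fderiv_fderiv_apply_comm {g : E → F} (hg : ContDiff ℝ 2 g) (x a b : E) :
    fderiv ℝ (fderiv ℝ g · a) x b = fderiv ℝ (fderiv ℝ g · b) x a := by
  have hd : DifferentiableAt ℝ (fderiv ℝ g) x :=
    (hg.fderiv_right (m := 1) le_rfl).differentiable one_ne_zero x
  rw [fderiv_clm_apply hd (differentiableAt_const a), fderiv_clm_apply hd (differentiableAt_const b)]
  simpa using hg.contDiffAt.isSymmSndFDerivAt (by simp) b a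

theorem fderiv_fun_mul_apply {f g : E → ℝ} {x : E} (hf : DifferentiableAt ℝ f x)
    (hg : DifferentiableAt ℝ g x) (v : E) :
    fderiv ℝ (fun y => f y * g y) x v = fderiv ℝ f x v * g x + f x * fderiv ℝ g x v := by
  simp only [fderiv_fun_mul hf hg, add_apply, smul_apply, smul_eq_mul]
  ring

theorem integral_finset_sum_sum {X ι κ : Type*} [MeasurableSpace X] {μ : Measure X}
    (s : Finset ι) (t : Finset κ) {f : ι → κ → X → F}
    (hf : ∀ i ∈ s, ∀ j ∈ t, Integrable (f i j) μ) :
    ∫ x, ∑ i ∈ s, ∑ j ∈ t, f i j x ∂μ = ∑ i ∈ s, ∑ j ∈ t, ∫ x, f i j x ∂μ := by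
  rw [integral_finsetSum _ fun i hi => integrable_finsetSum _ (hf i hi)]
  exact Finset.sum_congr rfl fun i hi => integral_finsetSum _ (hf i hi)

variable [FiniteDimensional ℝ E] [MeasurableSpace E] [BorelSpace E] {μ : Measure E}
  [μ.IsAddHaarMeasure]

theorem integral_mul_fderiv_eq_neg_fderiv_mul_of_hasCompactSupport {f g : E → ℝ}
    (hf : ContDiff ℝ 1 f) (hg : ContDiff ℝ 1 g) (hfs : HasCompactSupport f) (v : E) :
    ∫ x, f x * fderiv ℝ g x v ∂μ = -∫ x, fderiv ℝ f x v * g x ∂μ := by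
  have hf' := hf.fderiv_right_apply (m := 0) le_rfl v
  have hg' := hg.fderiv_right_apply (m := 0) le_rfl v
  exact integral_mul_fderiv_eq_neg_fderiv_mul_of_integrable
    ((hf'.continuous.mul hg.continuous).integrable_of_hasCompactSupport
      (hfs.fderiv_apply (𝕜 := ℝ) v).mul_right)
    ((hf.continuous.mul hg'.continuous).integrable_of_hasCompactSupport hfs.mul_right)
    ((hf.continuous.mul hg.continuous).integrable_of_hasCompactSupport hfs.mul_right)
    (fun x _ => hf.differentiable one_ne_zero x) (fun x _ => hg.differentiable one_ne_zero x)

theorem integral_sq_mul_fderiv {h w : E → ℝ} (hh : ContDiff ℝ 1 h) (hw : ContDiff ℝ 1 w)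
    (hhs : HasCompactSupport h) (a : E) :
    ∫ x, h x ^ 2 * fderiv ℝ w x a ∂μ = -(2 * ∫ x, w x * h x * fderiv ℝ h x a ∂μ) := by
  have hdh := hh.differentiable one_ne_zero
  calc ∫ x, h x ^ 2 * fderiv ℝ w x a ∂μ
      = ∫ x, (h x * h x) * fderiv ℝ w x a ∂μ := by simp only [sq]
    _ = -∫ x, fderiv ℝ (fun y => h y * h y) x a * w x ∂μ :=
        integral_mul_fderiv_eq_neg_fderiv_mul_of_hasCompactSupport (hh.mul hh) hw hhs.mul_left a
    _ = -∫ x, 2 * (w x * h x * fderiv ℝ h x a) ∂μ := by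
        congr 2 with x
        rw [fderiv_fun_mul_apply (hdh x) (hdh x)]
        ring
    _ = _ := by rw [integral_const_mul]

theorem integral_fderiv_fderiv_mul_mul_fderiv {w g : E → ℝ} (hw : ContDiff ℝ 1 w)
    (hg : ContDiff ℝ 2 g) (hgs : HasCompactSupport g) (a b : E) :
    ∫ x, fderiv ℝ (fderiv ℝ g · b) x b * (w x * fderiv ℝ g x a) ∂μ =
      -∫ x, fderiv ℝ w x b * fderiv ℝ g x a * fderiv ℝ g x b ∂μ
        + 1 / 2 * ∫ x, fderiv ℝ g x b ^ 2 * fderiv ℝ w x a ∂μ := by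
  set ga := (fderiv ℝ g · a)
  set gb := (fderiv ℝ g · b)
  have hga : ContDiff ℝ 1 ga := hg.fderiv_right_apply (by norm_num) a
  have hgb : ContDiff ℝ 1 gb := hg.fderiv_right_apply (by norm_num) b
  have hgbs : HasCompactSupport gb := hgs.fderiv_apply (𝕜 := ℝ) b
  have hdw := hw.differentiable one_ne_zero
  have hdga := hga.differentiable one_ne_zero
  have hB : Integrable (fun x => fderiv ℝ w x b * ga x * gb x) μ :=
    (((hw.fderiv_right_apply (m := 0) le_rfl b).continuous.mul hga.continuous).mul
      hgb.continuous).integrable_of_hasCompactSupport hgbs.mul_left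
  have hC : Integrable (fun x => w x * gb x * fderiv ℝ gb x a) μ :=
    ((hw.continuous.mul hgb.continuous).mul
      (hgb.fderiv_right_apply (m := 0) le_rfl a).continuous).integrable_of_hasCompactSupport
      hgbs.mul_left.mul_right
  have by_parts_b : ∫ x, fderiv ℝ gb x b * (w x * ga x) ∂μ =
      -(∫ x, fderiv ℝ w x b * ga x * gb x ∂μ) - ∫ x, w x * gb x * fderiv ℝ gb x a ∂μ := by
    calc ∫ x, fderiv ℝ gb x b * (w x * ga x) ∂μ
        = -∫ x, gb x * fderiv ℝ (fun y => w y * ga y) x b ∂μ := by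
          rw [integral_mul_fderiv_eq_neg_fderiv_mul_of_hasCompactSupport hgb (hw.mul hga) hgbs,
            neg_neg]
      _ = -∫ x, (fderiv ℝ w x b * ga x * gb x + w x * gb x * fderiv ℝ gb x a) ∂μ := by
          congr 2 with x
          rw [fderiv_fun_mul_apply (hdw x) (hdga x), fderiv_fderiv_apply_comm hg x a b]
          ring
      _ = _ := by rw [integral_add hB hC]; ring
  have by_parts_a := integral_sq_mul_fderiv (μ := μ) hgb hw hgbs a
  linarith

end

/-- Rellich-type multiplier identity
`∫ Δλ (v·∇λ) = - Σ_{i,j} ∫ (∂vᵢ/∂xⱼ)(∂λ/∂xᵢ)(∂λ/∂xⱼ) + ½ ∫ |∇λ|² div v`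
for a `C¹` vector field `v` and a compactly supported `C²` function `λ` on `ℝ³`. -/
theorem rellich_multiplier_identity
    (v : EuclideanSpace ℝ (Fin 3) → EuclideanSpace ℝ (Fin 3))
    (l : EuclideanSpace ℝ (Fin 3) → ℝ)
    (hv : ContDiff ℝ 1 v) (hl : ContDiff ℝ 2 l) (hls : HasCompactSupport l) :
    ∫ x, lap l x * (∑ i, v x i * pd l i x)
      = -(∑ i, ∑ j, ∫ x, pd (fun y => v y i) j x * pd l i x * pd l j x)
        + (1 / 2) * ∫ x, (∑ i, (pd l i x) ^ 2) * divg v x := by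
  have hvi (i : Fin 3) : ContDiff ℝ 1 (fun y => v y i) :=
    (EuclideanSpace.proj (𝕜 := ℝ) i).contDiff.comp hv
  have hli (i : Fin 3) : ContDiff ℝ 1 (pd l i) := hl.fderiv_right_apply (by norm_num) _
  have hlis (i : Fin 3) : HasCompactSupport (pd l i) := hls.fderiv_apply (𝕜 := ℝ) _
  have hlap : ∫ x, lap l x * (∑ i, v x i * pd l i x)
      = ∑ i, ∑ j, ∫ x, pd (pd l j) j x * (v x i * pd l i x) := by
    simp only [lap, Finset.sum_mul_sum]
    rw [Finset.sum_comm, integral_finset_sum_sum]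
    exact fun j _ i _ => (((hli j).fderiv_right_apply (m := 0) le_rfl _).continuous.mul
      ((hvi i).continuous.mul (hli i).continuous)).integrable_of_hasCompactSupport
      ((hlis j).fderiv_apply (𝕜 := ℝ) _).mul_right
  have hdiv : ∫ x, (∑ i, (pd l i x) ^ 2) * divg v x
      = ∑ i, ∑ j, ∫ x, pd l j x ^ 2 * pd (fun y => v y i) i x := by
    simp only [divg, Finset.sum_mul_sum]
    rw [Finset.sum_comm, integral_finset_sum_sum]
    exact fun j _ i _ => (((hli j).continuous.pow 2).mul
      ((hvi i).fderiv_right_apply (m := 0) le_rfl _).continuous).integrable_of_hasCompactSupport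
      ((hlis j).comp_left (g := (· ^ 2)) (zero_pow two_ne_zero)).mul_right
  have hpair (i j : Fin 3) : ∫ x, pd (pd l j) j x * (v x i * pd l i x)
      = -(∫ x, pd (fun y => v y i) j x * pd l i x * pd l j x)
        + 1 / 2 * ∫ x, pd l j x ^ 2 * pd (fun y => v y i) i x :=
    integral_fderiv_fderiv_mul_mul_fderiv (hvi i) hl hls _ _
  rw [hlap, hdiv]
  simp only [hpair, Finset.sum_add_distrib, Finset.sum_neg_distrib, ← Finset.mul_sum]
end
end

section
/- Let ε > 0, k > 0, let v : ℝ³ → ℝ³ be a C³ vector field, let λ : ℝ³ → ℝ be a C³ function with compact support, and define G := −εΔλ + kλ + v·∇λ + ½(div v)λ. Then ε ∫_{ℝ³} (Δλ)² dx + k ∫_{ℝ³} |∇λ|² dx + Σ_{i,j=1}^{3} ∫_{ℝ³} (∂v_i/∂x_j)(∂λ/∂x_i)(∂λ/∂x_j) dx − ¼ ∫_{ℝ³} λ² Δ(div v) dx = ∫_{ℝ³} ∇G·∇λ dx. -/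
/-! Pairing `∇G` with `∇λ` splits `∫ ∇G·∇λ` into four pieces. Green's identity turns the
`-εΔλ` piece into `ε∫(Δλ)²`. In the transport piece, symmetry of second derivatives gives
`Σᵢ vⱼ ∂ᵢ∂ⱼλ ∂ᵢλ = ½ vⱼ ∂ⱼ|∇λ|²`, so one integration by parts produces `-½∫(div v)|∇λ|²`;
this cancels against the `+½∫(div v)|∇λ|²` coming from `½(div v)λ`, whose other half is
`¼∫∇(div v)·∇(λ²) = -¼∫λ²Δ(div v)`. -/

open MeasureTheory

noncomputable section

local notation "ℝ³" => EuclideanSpace ℝ (Fin 3)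

section Differentiation

variable {F : Type*} [NormedAddCommGroup F] [NormedSpace ℝ F]

theorem contDiff_pd {m n : WithTop ℕ∞} {f : ℝ³ → F} (hf : ContDiff ℝ n f) (hmn : m + 1 ≤ n)
    (i : Fin 3) : ContDiff ℝ m (pd f i) :=
  (hf.fderiv_right hmn).clm_apply contDiff_const

theorem contDiff_lap {m n : WithTop ℕ∞} {f : ℝ³ → F} (hf : ContDiff ℝ n f) (hmn : m + 2 ≤ n) :
    ContDiff ℝ m (lap f) :=
  ContDiff.sum fun i _ =>
    contDiff_pd (contDiff_pd hf (by rwa [add_assoc, one_add_one_eq_two]) i) le_rfl i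

theorem contDiff_divg {m n : WithTop ℕ∞} {v : ℝ³ → ℝ³} (hv : ContDiff ℝ n v) (hmn : m + 1 ≤ n) :
    ContDiff ℝ m (divg v) :=
  ContDiff.sum fun i _ => contDiff_pd (contDiff_euclidean.1 hv i) hmn i

theorem hasCompactSupport_pd {f : ℝ³ → F} (hf : HasCompactSupport f) (i : Fin 3) :
    HasCompactSupport (pd f i) :=
  hf.fderiv_apply ℝ _

theorem hasCompactSupport_lap {f : ℝ³ → F} (hf : HasCompactSupport f) :
    HasCompactSupport (lap f) := by
  have h := HasCompactSupport.finset_sum (s := Finset.univ) fun i _ =>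
    hasCompactSupport_pd (hasCompactSupport_pd hf i) i
  rwa [Finset.sum_fn] at h

theorem pd_add {f g : ℝ³ → F} {x : ℝ³} (hf : DifferentiableAt ℝ f x)
    (hg : DifferentiableAt ℝ g x) (i : Fin 3) :
    pd (fun y => f y + g y) i x = pd f i x + pd g i x := by
  simp [pd, fderiv_fun_add hf hg]

theorem pd_sum {ι : Type*} {s : Finset ι} {f : ι → ℝ³ → F} {x : ℝ³}
    (hf : ∀ j ∈ s, DifferentiableAt ℝ (f j) x) (i : Fin 3) :
    pd (fun y => ∑ j ∈ s, f j y) i x = ∑ j ∈ s, pd (f j) i x := by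
  simp [pd, fderiv_fun_sum hf]

theorem pd_comm {f : ℝ³ → F} (hf : ContDiff ℝ 2 f) (i j : Fin 3) (x : ℝ³) :
    pd (pd f i) j x = pd (pd f j) i x := by
  have hdf : DifferentiableAt ℝ (fderiv ℝ f) x :=
    (hf.fderiv_right (m := 1) (by norm_num)).differentiable one_ne_zero x
  have pd_pd (a b : Fin 3) : pd (pd f a) b x =
      fderiv ℝ (fderiv ℝ f) x (EuclideanSpace.single b 1) (EuclideanSpace.single a 1) := by
    change fderiv ℝ (fun y => fderiv ℝ f y (EuclideanSpace.single a 1)) x _ = _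
    rw [fderiv_clm_apply hdf (differentiableAt_const _)]
    simp
  rw [pd_pd, pd_pd]
  exact (hf.contDiffAt.isSymmSndFDerivAt (by norm_num)).eq _ _

variable {f g : ℝ³ → ℝ} {x : ℝ³}

theorem pd_mul (hf : DifferentiableAt ℝ f x) (hg : DifferentiableAt ℝ g x) (i : Fin 3) :
    pd (fun y => f y * g y) i x = pd f i x * g x + f x * pd g i x := by
  simp [pd, fderiv_fun_mul hf hg]
  ring

theorem pd_const_mul (hf : DifferentiableAt ℝ f x) (c : ℝ) (i : Fin 3) :
    pd (fun y => c * f y) i x = c * pd f i x := by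
  simp [pd, fderiv_const_mul hf c]

theorem pd_sq (hf : DifferentiableAt ℝ f x) (i : Fin 3) :
    pd (fun y => f y ^ 2) i x = 2 * f x * pd f i x := by
  simp only [sq]
  rw [pd_mul hf hf]
  ring

theorem pd_sum_sq_pd (hf : ContDiff ℝ 2 f) (j : Fin 3) (x : ℝ³) :
    pd (fun y => ∑ i, pd f i y ^ 2) j x = 2 * ∑ i, pd f i x * pd (pd f j) i x := by
  have hpdf (i : Fin 3) : DifferentiableAt ℝ (pd f i) x :=
    (contDiff_pd hf (m := 1) (by norm_num) i).differentiable one_ne_zero x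
  rw [pd_sum (f := fun i y => pd f i y ^ 2) fun i _ => (hpdf i).pow 2, Finset.mul_sum]
  refine Finset.sum_congr rfl fun i _ => ?_
  rw [pd_sq (hpdf i), pd_comm hf]
  ring

end Differentiation

section IntegrationByParts

theorem integrable_mul_of_hasCompactSupport_left {X : Type*} [TopologicalSpace X]
    [MeasurableSpace X] [OpensMeasurableSpace X] {μ : Measure X} [IsFiniteMeasureOnCompacts μ]
    {f g : X → ℝ} (hf : Continuous f) (hfs : HasCompactSupport f) (hg : Continuous g) :
    Integrable (fun x => f x * g x) μ :=
  (hf.mul hg).integrable_of_hasCompactSupport hfs.mul_right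

theorem integrable_mul_of_hasCompactSupport_right {X : Type*} [TopologicalSpace X]
    [MeasurableSpace X] [OpensMeasurableSpace X] {μ : Measure X} [IsFiniteMeasureOnCompacts μ]
    {f g : X → ℝ} (hf : Continuous f) (hg : Continuous g) (hgs : HasCompactSupport g) :
    Integrable (fun x => f x * g x) μ :=
  (hf.mul hg).integrable_of_hasCompactSupport hgs.mul_left

variable {f g : ℝ³ → ℝ}

theorem integral_mul_pd_eq_neg_integral_pd_mul (hf : ContDiff ℝ 1 f) (hfs : HasCompactSupport f)
    (hg : ContDiff ℝ 1 g) (i : Fin 3) :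
    ∫ x, f x * pd g i x = -∫ x, pd f i x * g x := by
  have hpdf : Continuous (pd f i) := (contDiff_pd (m := 0) hf (by norm_num) i).continuous
  have hpdg : Continuous (pd g i) := (contDiff_pd (m := 0) hg (by norm_num) i).continuous
  exact integral_mul_fderiv_eq_neg_fderiv_mul_of_integrable
    (integrable_mul_of_hasCompactSupport_left hpdf (hasCompactSupport_pd hfs i) hg.continuous)
    (integrable_mul_of_hasCompactSupport_left hf.continuous hfs hpdg)
    (integrable_mul_of_hasCompactSupport_left hf.continuous hfs hg.continuous)
    (fun x _ => hf.differentiable one_ne_zero x) (fun x _ => hg.differentiable one_ne_zero x)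

theorem integral_sum_pd_mul_pd_eq_neg_integral_mul_lap (hf : ContDiff ℝ 1 f)
    (hfs : HasCompactSupport f) (hg : ContDiff ℝ 2 g) :
    ∫ x, ∑ i, pd f i x * pd g i x = -∫ x, f x * lap g x := by
  have hpdg (i : Fin 3) : ContDiff ℝ 1 (pd g i) := contDiff_pd hg (by norm_num) i
  have hpdpdg (i : Fin 3) : Continuous (pd (pd g i) i) :=
    (contDiff_pd (m := 0) (hpdg i) (by norm_num) i).continuous
  calc ∫ x, ∑ i, pd f i x * pd g i x
      = ∑ i, ∫ x, pd f i x * pd g i x :=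
        integral_finsetSum _ fun i _ => integrable_mul_of_hasCompactSupport_left
          (contDiff_pd (m := 0) hf (by norm_num) i).continuous (hasCompactSupport_pd hfs i)
          (hpdg i).continuous
    _ = ∑ i, -∫ x, f x * pd (pd g i) i x := by
        congr! 1 with i
        rw [integral_mul_pd_eq_neg_integral_pd_mul hf hfs (hpdg i), neg_neg]
    _ = -∫ x, f x * lap g x := by
        rw [Finset.sum_neg_distrib, ← integral_finsetSum _ fun i _ =>
          integrable_mul_of_hasCompactSupport_left hf.continuous hfs (hpdpdg i)]
        simp only [lap, Finset.mul_sum]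

theorem integral_sum_mul_pd_eq_neg_integral_divg_mul {v : ℝ³ → ℝ³} (hv : ContDiff ℝ 1 v)
    (hg : ContDiff ℝ 1 g) (hgs : HasCompactSupport g) :
    ∫ x, ∑ j, v x j * pd g j x = -∫ x, divg v x * g x := by
  have hvj (j : Fin 3) : ContDiff ℝ 1 (fun y => v y j) := contDiff_euclidean.1 hv j
  have hpdvj (j : Fin 3) : Continuous (pd (fun y => v y j) j) :=
    (contDiff_pd (m := 0) (hvj j) (by norm_num) j).continuous
  calc ∫ x, ∑ j, v x j * pd g j x
      = ∑ j, ∫ x, pd g j x * v x j := by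
        rw [integral_finsetSum _ fun j _ => integrable_mul_of_hasCompactSupport_right
          (hvj j).continuous (contDiff_pd (m := 0) hg (by norm_num) j).continuous
          (hasCompactSupport_pd hgs j)]
        simp only [mul_comm]
    _ = ∑ j, -∫ x, g x * pd (fun y => v y j) j x := by
        congr! 1 with j
        rw [integral_mul_pd_eq_neg_integral_pd_mul hg hgs (hvj j), neg_neg]
    _ = -∫ x, divg v x * g x := by
        rw [Finset.sum_neg_distrib, ← integral_finsetSum _ fun j _ =>
          integrable_mul_of_hasCompactSupport_left hg.continuous hgs (hpdvj j)]
        simp only [divg, Finset.sum_mul, mul_comm (g _)]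

end IntegrationByParts

section Multiplier

variable {f g h l : ℝ³ → ℝ} {v : ℝ³ → ℝ³}

theorem integrable_sum_pd_mul_pd (hf : ContDiff ℝ 1 f) (hh : ContDiff ℝ 1 h)
    (hhs : HasCompactSupport h) : Integrable (fun x => ∑ i, pd f i x * pd h i x) :=
  integrable_finsetSum _ fun i _ => integrable_mul_of_hasCompactSupport_right
    (contDiff_pd (m := 0) hf (by norm_num) i).continuous
    (contDiff_pd (m := 0) hh (by norm_num) i).continuous (hasCompactSupport_pd hhs i)

theorem integral_sum_pd_add_mul_pd (hf : ContDiff ℝ 1 f) (hg : ContDiff ℝ 1 g)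
    (hh : ContDiff ℝ 1 h) (hhs : HasCompactSupport h) :
    ∫ x, ∑ i, pd (fun y => f y + g y) i x * pd h i x
      = (∫ x, ∑ i, pd f i x * pd h i x) + ∫ x, ∑ i, pd g i x * pd h i x := by
  simp_rw [pd_add (hf.differentiable one_ne_zero _) (hg.differentiable one_ne_zero _), add_mul,
    Finset.sum_add_distrib]
  exact integral_add (integrable_sum_pd_mul_pd hf hh hhs) (integrable_sum_pd_mul_pd hg hh hhs)

theorem integral_sum_pd_const_mul_mul_pd (hf : Differentiable ℝ f) (c : ℝ) :
    ∫ x, ∑ i, pd (fun y => c * f y) i x * pd h i x = c * ∫ x, ∑ i, pd f i x * pd h i x := by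
  simp_rw [pd_const_mul (hf _), mul_assoc, ← Finset.mul_sum]
  exact integral_const_mul c _

theorem integral_sum_pd_lap_mul_pd (hl : ContDiff ℝ 3 l) (hls : HasCompactSupport l) :
    ∫ x, ∑ i, pd (lap l) i x * pd l i x = -∫ x, lap l x ^ 2 := by
  rw [integral_sum_pd_mul_pd_eq_neg_integral_mul_lap (contDiff_lap hl (by norm_num))
    (hasCompactSupport_lap hls) (hl.of_le (by norm_num))]
  simp only [sq]

theorem sum_pd_transport_mul_pd (hv : ContDiff ℝ 1 v) (hl : ContDiff ℝ 2 l) (x : ℝ³) :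
    ∑ i, pd (fun y => ∑ j, v y j * pd l j y) i x * pd l i x
      = (∑ i, ∑ j, pd (fun y => v y i) j x * pd l i x * pd l j x)
        + 1 / 2 * ∑ j, v x j * pd (fun y => ∑ i, pd l i y ^ 2) j x := by
  have hvj (j : Fin 3) : DifferentiableAt ℝ (fun y => v y j) x :=
    (contDiff_euclidean.1 hv j).differentiable one_ne_zero x
  have hpdl (j : Fin 3) : DifferentiableAt ℝ (pd l j) x :=
    (contDiff_pd (m := 1) hl (by norm_num) j).differentiable one_ne_zero x
  have pd_transport (i : Fin 3) : pd (fun y => ∑ j, v y j * pd l j y) i x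
      = ∑ j, (pd (fun y => v y j) i x * pd l j x + v x j * pd (pd l j) i x) := by
    rw [pd_sum (f := fun j y => v y j * pd l j y) fun j _ => (hvj j).mul (hpdl j)]
    simp_rw [pd_mul (hvj _) (hpdl _)]
  simp_rw [pd_transport, pd_sum_sq_pd hl]
  simp only [Fin.sum_univ_three]
  ring

theorem hasCompactSupport_sum_sq_pd (hl : HasCompactSupport l) :
    HasCompactSupport (fun x => ∑ i, pd l i x ^ 2) := by
  have h := HasCompactSupport.finset_sum (s := Finset.univ) fun i _ =>
    (hasCompactSupport_pd hl i).comp_left (g := (· ^ 2)) (zero_pow two_ne_zero)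
  rwa [Finset.sum_fn] at h

theorem integral_sum_pd_transport_mul_pd (hv : ContDiff ℝ 1 v) (hl : ContDiff ℝ 2 l)
    (hls : HasCompactSupport l) :
    ∫ x, ∑ i, pd (fun y => ∑ j, v y j * pd l j y) i x * pd l i x
      = (∑ i, ∑ j, ∫ x, pd (fun y => v y i) j x * pd l i x * pd l j x)
        - 1 / 2 * ∫ x, divg v x * ∑ i, pd l i x ^ 2 := by
  have hvj (j : Fin 3) : ContDiff ℝ 1 (fun y => v y j) := contDiff_euclidean.1 hv j
  have hpdl (j : Fin 3) : ContDiff ℝ 1 (pd l j) := contDiff_pd hl (by norm_num) j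
  have hsq : ContDiff ℝ 1 (fun x => ∑ i, pd l i x ^ 2) :=
    ContDiff.sum fun i _ => (hpdl i).pow 2
  have hA (i j : Fin 3) : Integrable (fun x => pd (fun y => v y i) j x * pd l i x * pd l j x) :=
    integrable_mul_of_hasCompactSupport_right
      ((contDiff_pd (m := 0) (hvj i) (by norm_num) j).continuous.mul (hpdl i).continuous)
      (hpdl j).continuous (hasCompactSupport_pd hls j)
  have hB (j : Fin 3) : Integrable (fun x => v x j * pd (fun y => ∑ i, pd l i y ^ 2) j x) :=
    integrable_mul_of_hasCompactSupport_right (hvj j).continuous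
      (contDiff_pd (m := 0) hsq (by norm_num) j).continuous
      (hasCompactSupport_pd (hasCompactSupport_sum_sq_pd hls) j)
  simp_rw [sum_pd_transport_mul_pd hv hl]
  rw [integral_add (integrable_finsetSum _ fun i _ => integrable_finsetSum _ fun j _ => hA i j)
      ((integrable_finsetSum _ fun j _ => hB j).const_mul _),
    integral_finsetSum _ fun i _ => integrable_finsetSum _ fun j _ => hA i j,
    integral_const_mul, integral_sum_mul_pd_eq_neg_integral_divg_mul hv hsq
      (hasCompactSupport_sum_sq_pd hls)]
  simp_rw [integral_finsetSum _ fun j _ => hA _ j]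
  ring

theorem sum_pd_divg_mul_mul_pd (hv : ContDiff ℝ 2 v) (hl : Differentiable ℝ l) (x : ℝ³) :
    ∑ i, pd (fun y => divg v y * l y) i x * pd l i x
      = 1 / 2 * (∑ i, pd (fun y => l y ^ 2) i x * pd (divg v) i x)
        + divg v x * ∑ i, pd l i x ^ 2 := by
  have hdivg : DifferentiableAt ℝ (divg v) x :=
    (contDiff_divg (m := 1) hv (by norm_num)).differentiable one_ne_zero x
  simp_rw [pd_mul hdivg (hl x), pd_sq (hl x), Finset.mul_sum, ← Finset.sum_add_distrib]
  exact Finset.sum_congr rfl fun i _ => by ring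

theorem integral_sum_pd_divg_mul_mul_pd (hv : ContDiff ℝ 3 v) (hl : ContDiff ℝ 1 l)
    (hls : HasCompactSupport l) :
    ∫ x, ∑ i, pd (fun y => divg v y * l y) i x * pd l i x
      = -(1 / 2) * (∫ x, l x ^ 2 * lap (divg v) x) + ∫ x, divg v x * ∑ i, pd l i x ^ 2 := by
  have hdivg : ContDiff ℝ 2 (divg v) := contDiff_divg hv (by norm_num)
  have hsq : ContDiff ℝ 1 (fun x => l x ^ 2) := hl.pow 2
  have hsqs : HasCompactSupport (fun x => l x ^ 2) := hls.comp_left (zero_pow two_ne_zero)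
  have hpdl (i : Fin 3) : Continuous (pd l i) := (contDiff_pd (m := 0) hl le_rfl i).continuous
  have hgrad : Continuous (fun x => ∑ i, pd l i x ^ 2) := by fun_prop
  have hdivg_sq : Integrable (fun x => ∑ i, pd (fun y => l y ^ 2) i x * pd (divg v) i x) :=
    integrable_finsetSum _ fun i _ => integrable_mul_of_hasCompactSupport_left
      (contDiff_pd (m := 0) hsq le_rfl i).continuous (hasCompactSupport_pd hsqs i)
      (contDiff_pd (m := 0) hdivg (by norm_num) i).continuous
  simp_rw [sum_pd_divg_mul_mul_pd (hv.of_le (by norm_num)) (hl.differentiable one_ne_zero)]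
  rw [integral_add (hdivg_sq.const_mul _)
      (integrable_mul_of_hasCompactSupport_right hdivg.continuous hgrad
        (hasCompactSupport_sum_sq_pd hls)),
    integral_const_mul, integral_sum_pd_mul_pd_eq_neg_integral_mul_lap hsq hsqs hdivg]
  ring

end Multiplier

theorem regularized_multiplier_identity_general
    (ε k : ℝ)
    (v : EuclideanSpace ℝ (Fin 3) → EuclideanSpace ℝ (Fin 3))
    (l : EuclideanSpace ℝ (Fin 3) → ℝ)
    (hv : ContDiff ℝ 3 v) (hl : ContDiff ℝ 3 l) (hls : HasCompactSupport l)
    (G : EuclideanSpace ℝ (Fin 3) → ℝ)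
    (hG : G = fun x => -ε * lap l x + k * l x + (∑ i, v x i * pd l i x)
        + (1 / 2) * divg v x * l x) :
    ε * (∫ x, (lap l x) ^ 2) + k * (∫ x, ∑ i, (pd l i x) ^ 2)
        + (∑ i, ∑ j, ∫ x, pd (fun y => v y i) j x * pd l i x * pd l j x)
        - (1 / 4) * (∫ x, (l x) ^ 2 * lap (divg v) x)
      = ∫ x, ∑ i, pd G i x * pd l i x := by
  have hv1 : ContDiff ℝ 1 v := hv.of_le (by norm_num)
  have hl1 : ContDiff ℝ 1 l := hl.of_le (by norm_num)
  have hl2 : ContDiff ℝ 2 l := hl.of_le (by norm_num)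
  have hlap : ContDiff ℝ 1 (lap l) := contDiff_lap hl (by norm_num)
  have hdivg : ContDiff ℝ 1 (divg v) := contDiff_divg hv (by norm_num)
  have hvj (j : Fin 3) : ContDiff ℝ 1 (fun y => v y j) := contDiff_euclidean.1 hv1 j
  have hpdl (j : Fin 3) : ContDiff ℝ 1 (pd l j) := contDiff_pd hl2 (by norm_num) j
  have hG' : G = fun x => -ε * lap l x + k * l x + (∑ j, v x j * pd l j x)
      + 1 / 2 * (divg v x * l x) := by
    simp only [hG, mul_assoc]
  rw [hG', integral_sum_pd_add_mul_pd (by fun_prop) (by fun_prop) hl1 hls,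
    integral_sum_pd_add_mul_pd (by fun_prop) (by fun_prop) hl1 hls,
    integral_sum_pd_add_mul_pd (by fun_prop) (by fun_prop) hl1 hls,
    integral_sum_pd_const_mul_mul_pd (hlap.differentiable one_ne_zero),
    integral_sum_pd_const_mul_mul_pd (hl1.differentiable one_ne_zero),
    integral_sum_pd_const_mul_mul_pd ((hdivg.mul hl1).differentiable one_ne_zero),
    integral_sum_pd_lap_mul_pd hl hls, integral_sum_pd_transport_mul_pd hv1 hl2 hls,
    integral_sum_pd_divg_mul_mul_pd hv hl1 hls]
  simp only [sq]
  ring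

/-- multiplier identity obtained by testing the regularized
transport equation `-εΔλ + kλ + v·∇λ + ½(div v)λ = G` with `Δλ` and integrating
by parts, for a `C³` vector field `v` and a compactly supported `C³` function `λ`. -/
theorem regularized_multiplier_identity
    (ε k : ℝ) (hε : 0 < ε) (hk : 0 < k)
    (v : EuclideanSpace ℝ (Fin 3) → EuclideanSpace ℝ (Fin 3))
    (l : EuclideanSpace ℝ (Fin 3) → ℝ)
    (hv : ContDiff ℝ 3 v) (hl : ContDiff ℝ 3 l) (hls : HasCompactSupport l)
    (G : EuclideanSpace ℝ (Fin 3) → ℝ)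
    (hG : G = fun x => -ε * lap l x + k * l x + (∑ i, v x i * pd l i x)
        + (1 / 2) * divg v x * l x) :
    ε * (∫ x, (lap l x) ^ 2) + k * (∫ x, ∑ i, (pd l i x) ^ 2)
        + (∑ i, ∑ j, ∫ x, pd (fun y => v y i) j x * pd l i x * pd l j x)
        - (1 / 4) * (∫ x, (l x) ^ 2 * lap (divg v) x)
      = ∫ x, ∑ i, pd G i x * pd l i x :=
  regularized_multiplier_identity_general ε k v l hv hl hls G hG

end
end

section
/- Let ε ≥ 0, k > 0, let v : ℝ³ → ℝ³ be a C¹ vector field, let λ : ℝ³ → ℝ be a C² function with compact support, and define G := −εΔλ + kλ + v·∇λ + ½(div v)λ. Then k·‖λ‖_{L²(ℝ³)} ≤ ‖G‖_{L²(ℝ³)}. -/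
/-!
Pairing `G` with `λ` and integrating by parts in each coordinate direction, the diffusion term
contributes `ε ‖∇λ‖² ≥ 0`, while `(v · ∇λ) λ = ½ v · ∇(λ²)` integrates to `-½ ∫ (div v) λ²` and
exactly cancels the zeroth-order correction. Hence `k ‖λ‖² ≤ ∫ G λ ≤ ‖G‖ ‖λ‖` by Cauchy–Schwarz.
-/

open MeasureTheory

noncomputable section

section IntegrationByParts

variable {E : Type*} [NormedAddCommGroup E] [NormedSpace ℝ E] [FiniteDimensional ℝ E]
  [MeasurableSpace E] [BorelSpace E] {μ : Measure E} [μ.IsAddHaarMeasure]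

theorem integral_mul_fderiv_eq_neg_of_hasCompactSupport {f g : E → ℝ} (hf : ContDiff ℝ 1 f)
    (hg : ContDiff ℝ 1 g) (hfs : HasCompactSupport f) (w : E) :
    ∫ x, f x * fderiv ℝ g x w ∂μ = -∫ x, fderiv ℝ f x w * g x ∂μ := by
  have hf' : Continuous (fderiv ℝ f · w) :=
    (hf.continuous_fderiv one_ne_zero).clm_apply continuous_const
  have hg' : Continuous (fderiv ℝ g · w) :=
    (hg.continuous_fderiv one_ne_zero).clm_apply continuous_const
  exact integral_mul_fderiv_eq_neg_fderiv_mul_of_integrable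
    ((hf'.mul hg.continuous).integrable_of_hasCompactSupport (hfs.fderiv_apply ℝ w).mul_right)
    ((hf.continuous.mul hg').integrable_of_hasCompactSupport hfs.mul_right)
    ((hf.continuous.mul hg.continuous).integrable_of_hasCompactSupport hfs.mul_right)
    (fun x _ => hf.differentiable one_ne_zero x) (fun x _ => hg.differentiable one_ne_zero x)

theorem integral_fderiv_fderiv_mul_self {f : E → ℝ} (hf : ContDiff ℝ 2 f)
    (hfs : HasCompactSupport f) (w : E) :
    ∫ x, fderiv ℝ (fderiv ℝ f · w) x w * f x ∂μ = -∫ x, fderiv ℝ f x w ^ 2 ∂μ := by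
  have h := integral_mul_fderiv_eq_neg_of_hasCompactSupport (μ := μ) (hf.of_le one_le_two)
    ((hf.fderiv_right le_rfl).clm_apply (contDiff_const (c := w))) hfs w
  simpa only [mul_comm (f _), ← sq] using h

theorem integral_mul_fderiv_mul_self {a f : E → ℝ} (ha : ContDiff ℝ 1 a) (hf : ContDiff ℝ 1 f)
    (hfs : HasCompactSupport f) (w : E) :
    ∫ x, a x * fderiv ℝ f x w * f x ∂μ = -(1 / 2 * ∫ x, fderiv ℝ a x w * f x ^ 2 ∂μ) := by
  have hsq : ∀ x, fderiv ℝ (fun y => f y ^ 2) x w * a x = 2 * (a x * fderiv ℝ f x w * f x) :=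
    fun x => by simp [fderiv_fun_pow 2 (hf.differentiable one_ne_zero x)]; ring
  have h := integral_mul_fderiv_eq_neg_of_hasCompactSupport (μ := μ) (hf.pow 2) ha
    (hfs.comp_left (g := (· ^ 2)) (zero_pow two_ne_zero)) w
  simp only [hsq, integral_const_mul, mul_comm (f _ ^ 2)] at h
  linarith

theorem integral_directional_energy (ε : ℝ) {a f : E → ℝ} (ha : ContDiff ℝ 1 a)
    (hf : ContDiff ℝ 2 f) (hfs : HasCompactSupport f) (w : E) :
    ∫ x, (-ε * (fderiv ℝ (fderiv ℝ f · w) x w * f x) + a x * fderiv ℝ f x w * f x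
      + 1 / 2 * (fderiv ℝ a x w * f x ^ 2)) ∂μ = ε * ∫ x, fderiv ℝ f x w ^ 2 ∂μ := by
  have hf1 : ContDiff ℝ 1 f := hf.of_le one_le_two
  have hdf : Continuous (fderiv ℝ f · w) :=
    (hf1.continuous_fderiv one_ne_zero).clm_apply continuous_const
  have hddf : Continuous (fderiv ℝ (fderiv ℝ f · w) · w) :=
    (((hf.fderiv_right le_rfl).clm_apply (contDiff_const (c := w))).continuous_fderiv
      one_ne_zero).clm_apply continuous_const
  have hda : Continuous (fderiv ℝ a · w) :=
    (ha.continuous_fderiv one_ne_zero).clm_apply continuous_const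
  have hf2s : HasCompactSupport (f · ^ 2) := hfs.comp_left (g := (· ^ 2)) (zero_pow two_ne_zero)
  have hdiff : Integrable (fun x => -ε * (fderiv ℝ (fderiv ℝ f · w) x w * f x)) μ :=
    ((hddf.mul hf.continuous).integrable_of_hasCompactSupport hfs.mul_left).const_mul _
  have htransp : Integrable (fun x => a x * fderiv ℝ f x w * f x) μ :=
    ((ha.continuous.mul hdf).mul hf.continuous).integrable_of_hasCompactSupport hfs.mul_left
  have hdiv : Integrable (fun x => 1 / 2 * (fderiv ℝ a x w * f x ^ 2)) μ :=
    ((hda.mul (hf.continuous.pow 2)).integrable_of_hasCompactSupport hf2s.mul_left).const_mul _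
  rw [integral_add (hdiff.fun_add htransp) hdiv, integral_add hdiff htransp, integral_const_mul,
    integral_const_mul, integral_fderiv_fderiv_mul_self hf hfs,
    integral_mul_fderiv_mul_self ha hf1 hfs]
  ring

end IntegrationByParts

theorem integral_mul_le_sqrt_mul_sqrt {α : Type*} [MeasurableSpace α] {μ : Measure α}
    {f g : α → ℝ} (hf : MemLp f 2 μ) (hg : MemLp g 2 μ) :
    ∫ x, f x * g x ∂μ ≤ √(∫ x, f x ^ 2 ∂μ) * √(∫ x, g x ^ 2 ∂μ) := by
  have hL2 : ENNReal.ofReal 2 = 2 := ENNReal.ofReal_ofNat 2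
  calc ∫ x, f x * g x ∂μ ≤ ∫ x, |f x| * |g x| ∂μ :=
        integral_mono (hf.integrable_mul hg) (hf.abs.integrable_mul hg.abs)
          fun x => abs_mul (f x) (g x) ▸ le_abs_self _
    _ ≤ (∫ x, |f x| ^ (2 : ℝ) ∂μ) ^ (1 / (2 : ℝ)) * (∫ x, |g x| ^ (2 : ℝ) ∂μ) ^ (1 / (2 : ℝ)) :=
        integral_mul_le_Lp_mul_Lq_of_nonneg Real.HolderConjugate.two_two
          (ae_of_all _ fun x => abs_nonneg (f x)) (ae_of_all _ fun x => abs_nonneg (g x))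
          (hL2 ▸ hf.abs) (hL2 ▸ hg.abs)
    _ = √(∫ x, f x ^ 2 ∂μ) * √(∫ x, g x ^ 2 ∂μ) := by
        simp only [Real.rpow_two, sq_abs, Real.sqrt_eq_rpow]

theorem mul_sqrt_le_sqrt_of_mul_le {k A C : ℝ} (hA : 0 ≤ A) (h : k * A ≤ √C * √A) :
    k * √A ≤ √C := by
  rcases (Real.sqrt_nonneg A).eq_or_lt with h0 | hpos
  · rw [← h0, mul_zero]
    exact Real.sqrt_nonneg C
  · refine le_of_mul_le_mul_right ?_ hpos
    rwa [mul_assoc, Real.mul_self_sqrt hA]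

section Euclidean3

local notation "ℝ³" => EuclideanSpace ℝ (Fin 3)

variable {F : Type*} [NormedAddCommGroup F] [NormedSpace ℝ F]

theorem ContDiff.continuous_pd {f : ℝ³ → F} (hf : ContDiff ℝ 1 f) (i : Fin 3) :
    Continuous (pd f i) :=
  (hf.continuous_fderiv one_ne_zero).clm_apply continuous_const

theorem ContDiff.pd {f : ℝ³ → F} (hf : ContDiff ℝ 2 f) (i : Fin 3) : ContDiff ℝ 1 (pd f i) :=
  (hf.fderiv_right le_rfl).clm_apply contDiff_const

theorem tsupport_pd_subset (f : ℝ³ → F) (i : Fin 3) : tsupport (pd f i) ⊆ tsupport f :=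
  tsupport_fderiv_apply_subset ℝ _

def transportOperator (ε k : ℝ) (v : ℝ³ → ℝ³) (l : ℝ³ → ℝ) (x : ℝ³) : ℝ :=
  -ε * lap l x + k * l x + (∑ i, v x i * pd l i x) + (1 / 2) * divg v x * l x

variable {v : ℝ³ → ℝ³} {l : ℝ³ → ℝ}

theorem continuous_transportOperator (ε k : ℝ) (hv : ContDiff ℝ 1 v) (hl : ContDiff ℝ 2 l) :
    Continuous (transportOperator ε k v l) := by
  have hl1 : ContDiff ℝ 1 l := hl.of_le one_le_two
  have := fun i => (hl.pd i).continuous_pd i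
  have := hl1.continuous_pd
  have := fun i => (contDiff_euclidean.1 hv i).continuous_pd i
  have := fun i => (contDiff_euclidean.1 hv i).continuous
  unfold transportOperator lap divg
  fun_prop

theorem hasCompactSupport_transportOperator (ε k : ℝ) (v : ℝ³ → ℝ³) (hls : HasCompactSupport l) :
    HasCompactSupport (transportOperator ε k v l) := by
  refine hls.mono' fun x hx => ?_
  by_contra hxl
  have hd : ∀ i, pd l i x = 0 := fun i =>
    image_eq_zero_of_notMem_tsupport fun h => hxl (tsupport_pd_subset l i h)
  have hdd : ∀ i, pd (pd l i) i x = 0 := fun i => image_eq_zero_of_notMem_tsupport fun h =>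
    hxl (tsupport_pd_subset l i (tsupport_pd_subset _ i h))
  exact hx (by simp [transportOperator, lap, hd, hdd, image_eq_zero_of_notMem_tsupport hxl])

theorem integral_transportOperator_mul_self (ε k : ℝ) (hv : ContDiff ℝ 1 v)
    (hl : ContDiff ℝ 2 l) (hls : HasCompactSupport l) :
    ∫ x, transportOperator ε k v l x * l x = ε * (∑ i, ∫ x, pd l i x ^ 2) + k * ∫ x, l x ^ 2 := by
  have hl1 : ContDiff ℝ 1 l := hl.of_le one_le_two
  let T : Fin 3 → ℝ³ → ℝ := fun i x => -ε * (pd (pd l i) i x * l x) + v x i * pd l i x * l x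
    + 1 / 2 * (pd (fun y => v y i) i x * l x ^ 2)
  have hsplit : ∀ x, transportOperator ε k v l x * l x = ∑ i, T i x + k * l x ^ 2 := fun x => by
    simp only [T, transportOperator, lap, divg, Fin.sum_univ_three]
    ring
  have hTint : ∀ i, Integrable (T i) := fun i => by
    have := (hl.pd i).continuous_pd i
    have := hl1.continuous_pd i
    have := (contDiff_euclidean.1 hv i).continuous_pd i
    have := (contDiff_euclidean.1 hv i).continuous
    refine Continuous.integrable_of_hasCompactSupport (by fun_prop) (hls.mono fun x hx hlx => ?_)
    simp [T, hlx] at hx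
  have hTeq : ∀ i, ∫ x, T i x = ε * ∫ x, pd l i x ^ 2 := fun i =>
    integral_directional_energy ε (contDiff_euclidean.1 hv i) hl hls _
  have hl2s : HasCompactSupport (l · ^ 2) := hls.comp_left (g := (· ^ 2)) (zero_pow two_ne_zero)
  have hl2 : Integrable (fun x => l x ^ 2) :=
    (hl.continuous.pow 2).integrable_of_hasCompactSupport hl2s
  simp only [hsplit]
  rw [integral_add (integrable_finsetSum _ fun i _ => hTint i) (hl2.const_mul k),
    integral_finsetSum _ fun i _ => hTint i, integral_const_mul]
  simp only [hTeq, Finset.mul_sum]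

end Euclidean3

theorem apriori_L2_estimate_general
    (ε k : ℝ) (hε : 0 ≤ ε)
    (v : EuclideanSpace ℝ (Fin 3) → EuclideanSpace ℝ (Fin 3))
    (l : EuclideanSpace ℝ (Fin 3) → ℝ)
    (hv : ContDiff ℝ 1 v) (hl : ContDiff ℝ 2 l) (hls : HasCompactSupport l)
    (G : EuclideanSpace ℝ (Fin 3) → ℝ)
    (hG : G = fun x => -ε * lap l x + k * l x + (∑ i, v x i * pd l i x)
        + (1 / 2) * divg v x * l x) :
    k * (∫ x, (l x) ^ 2) ^ ((1 : ℝ) / 2) ≤ (∫ x, (G x) ^ 2) ^ ((1 : ℝ) / 2) := by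
  obtain rfl : G = transportOperator ε k v l := hG
  have hcoercive : k * ∫ x, l x ^ 2 ≤ ∫ x, transportOperator ε k v l x * l x := by
    rw [integral_transportOperator_mul_self ε k hv hl hls]
    have hgrad : 0 ≤ ∑ i, ∫ x, pd l i x ^ 2 :=
      Finset.sum_nonneg fun i _ => integral_nonneg fun x => sq_nonneg _
    linarith [mul_nonneg hε hgrad]
  have hCS := integral_mul_le_sqrt_mul_sqrt (μ := volume)
    ((continuous_transportOperator ε k hv hl).memLp_of_hasCompactSupport
      (hasCompactSupport_transportOperator ε k v hls))
    (hl.continuous.memLp_of_hasCompactSupport hls)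
  rw [← Real.sqrt_eq_rpow, ← Real.sqrt_eq_rpow]
  exact mul_sqrt_le_sqrt_of_mul_le (integral_nonneg fun x => sq_nonneg _) (hcoercive.trans hCS)

/-- the a priori `L²` estimate `k ‖λ‖_{L²} ≤ ‖G‖_{L²}` where
`G = -εΔλ + kλ + v·∇λ + ½(div v)λ`, for `ε ≥ 0`, `k > 0`, a `C¹` vector field
`v`, and a compactly supported `C²` function `λ` on `ℝ³`. -/
theorem apriori_L2_estimate
    (ε k : ℝ) (hε : 0 ≤ ε) (hk : 0 < k)
    (v : EuclideanSpace ℝ (Fin 3) → EuclideanSpace ℝ (Fin 3))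
    (l : EuclideanSpace ℝ (Fin 3) → ℝ)
    (hv : ContDiff ℝ 1 v) (hl : ContDiff ℝ 2 l) (hls : HasCompactSupport l)
    (G : EuclideanSpace ℝ (Fin 3) → ℝ)
    (hG : G = fun x => -ε * lap l x + k * l x + (∑ i, v x i * pd l i x)
        + (1 / 2) * divg v x * l x) :
    k * (∫ x, (l x) ^ 2) ^ ((1 : ℝ) / 2) ≤ (∫ x, (G x) ^ 2) ^ ((1 : ℝ) / 2) :=
  apriori_L2_estimate_general ε k hε v l hv hl hls G hG

end
end
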